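/- If Θ is a superchannel from A to B with Choi matrix J^Θ_{AB}, then for every channel N ∈ CPTP(A0→A1) the matrix R^Θ(J^N_A) := tr_A[J^Θ_{AB}((J^N_A)^T ⊗ I_B)] is positive semidefinite and satisfies tr_{B1}[R^Θ(J^N_A)] = I_{B0}; i.e., it is the Choi matrix of a quantum channel on B. -/

import Mathlib

open Matrix Kronecker BigOperators
open scoped ComplexOrder

noncomputable section

namespace Dyn

/-- The elementary map `E^{ijkl}(ρ) = ⟨i|ρ|j⟩ |k⟩⟨l|`. -/
def elemMap {A0 A1 : Type*} [DecidableEq A1] (i j : A0) (k l : A1) :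
    Matrix A0 A0 ℂ →ₗ[ℂ] Matrix A1 A1 ℂ where
  toFun ρ := ρ i j • Matrix.single k l 1
  map_add' x y := by simp [Matrix.add_apply, add_smul]
  map_smul' c x := by simp [Matrix.smul_apply, smul_smul]

/-- The Choi matrix `J^N = Σ_{i,j} |i⟩⟨j| ⊗ N(|i⟩⟨j|)`. -/
def choi {A0 A1 : Type*} [DecidableEq A0]
    (N : Matrix A0 A0 ℂ →ₗ[ℂ] Matrix A1 A1 ℂ) : Matrix (A0 × A1) (A0 × A1) ℂ :=
  Matrix.of fun p q => N (Matrix.single p.1 q.1 1) p.2 q.2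

/-- Inner product of maps, `⟨N,M⟩ = Σ_{ij} tr[(N(|i⟩⟨j|))† M(|i⟩⟨j|)]`. -/
def mapInner {A0 A1 : Type*} [Fintype A0] [DecidableEq A0] [Fintype A1]
    (N M : Matrix A0 A0 ℂ →ₗ[ℂ] Matrix A1 A1 ℂ) : ℂ :=
  ∑ i : A0, ∑ j : A0,
    Matrix.trace ((N (Matrix.single i j 1))ᴴ * M (Matrix.single i j 1))

/-- Tensor product of linear maps on matrix spaces. -/
def mapTensor {A0 A1 B0 B1 : Type*} [Fintype A0] [DecidableEq A0] [Fintype B0] [DecidableEq B0]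
    (N : Matrix A0 A0 ℂ →ₗ[ℂ] Matrix A1 A1 ℂ) (M : Matrix B0 B0 ℂ →ₗ[ℂ] Matrix B1 B1 ℂ) :
    Matrix (A0 × B0) (A0 × B0) ℂ →ₗ[ℂ] Matrix (A1 × B1) (A1 × B1) ℂ where
  toFun ρ := ∑ i : A0, ∑ j : A0, ∑ k : B0, ∑ l : B0,
      ρ (i, k) (j, l) • (N (Matrix.single i j 1) ⊗ₖ M (Matrix.single k l 1))
  map_add' x y := by
    simp [Matrix.add_apply, add_smul, Finset.sum_add_distrib]
  map_smul' c x := by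
    simp [Matrix.smul_apply, smul_smul, Finset.smul_sum]

/-- Trace preserving map. -/
def IsTracePreserving {A0 A1 : Type*} [Fintype A0] [Fintype A1]
    (N : Matrix A0 A0 ℂ →ₗ[ℂ] Matrix A1 A1 ℂ) : Prop :=
  ∀ ρ : Matrix A0 A0 ℂ, (N ρ).trace = ρ.trace

/-- Completely positive map: `id_R ⊗ N` preserves positive semidefiniteness for every ancilla `R`. -/
def IsCompletelyPositive {A0 A1 : Type*} [Fintype A0] [DecidableEq A0] [Fintype A1]
    (N : Matrix A0 A0 ℂ →ₗ[ℂ] Matrix A1 A1 ℂ) : Prop :=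
  ∀ (R : Type) [Fintype R] [DecidableEq R], ∀ ρ : Matrix (R × A0) (R × A0) ℂ,
    ρ.PosSemidef → ((mapTensor (LinearMap.id (R := ℂ) (M := Matrix R R ℂ)) N) ρ).PosSemidef

/-- A quantum channel: a completely positive trace-preserving map. -/
def IsChannel {A0 A1 : Type*} [Fintype A0] [DecidableEq A0] [Fintype A1]
    (N : Matrix A0 A0 ℂ →ₗ[ℂ] Matrix A1 A1 ℂ) : Prop :=
  IsCompletelyPositive N ∧ IsTracePreserving N

/-- The Choi matrix of a supermap `Θ`. -/
def superChoi {A0 A1 B0 B1 : Type*} [DecidableEq A1] [DecidableEq B0]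
    (Θ : (Matrix A0 A0 ℂ →ₗ[ℂ] Matrix A1 A1 ℂ) → (Matrix B0 B0 ℂ →ₗ[ℂ] Matrix B1 B1 ℂ)) :
    Matrix ((A0 × A1) × (B0 × B1)) ((A0 × A1) × (B0 × B1)) ℂ :=
  Matrix.of fun p q => choi (Θ (elemMap p.1.1 q.1.1 p.1.2 q.1.2)) p.2 q.2

/-- Extension `1_R ⊗ Θ` of a supermap to bipartite input maps. -/
def idSupertensor {A0 A1 B0 B1 : Type*} (R0 R1 : Type*)
    [Fintype R0] [DecidableEq R0] [Fintype R1] [DecidableEq R1]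
    [Fintype A0] [DecidableEq A0] [Fintype A1] [DecidableEq A1]
    [Fintype B0] [DecidableEq B0]
    (Θ : (Matrix A0 A0 ℂ →ₗ[ℂ] Matrix A1 A1 ℂ) → (Matrix B0 B0 ℂ →ₗ[ℂ] Matrix B1 B1 ℂ))
    (𝒩 : Matrix (R0 × A0) (R0 × A0) ℂ →ₗ[ℂ] Matrix (R1 × A1) (R1 × A1) ℂ) :
    Matrix (R0 × B0) (R0 × B0) ℂ →ₗ[ℂ] Matrix (R1 × B1) (R1 × B1) ℂ :=
  ∑ i0 : R0, ∑ j0 : R0, ∑ i1 : R1, ∑ j1 : R1,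
  ∑ a0 : A0, ∑ b0 : A0, ∑ a1 : A1, ∑ b1 : A1,
    choi 𝒩 ((i0, a0), (i1, a1)) ((j0, b0), (j1, b1)) •
      mapTensor (elemMap i0 j0 i1 j1) (Θ (elemMap a0 b0 a1 b1))

/-- A superchannel: a linear supermap that is completely positive and takes
trace-preserving maps to trace-preserving maps. -/
def IsSuperchannel {A0 A1 B0 B1 : Type*}
    [Fintype A0] [DecidableEq A0] [Fintype A1] [DecidableEq A1]
    [Fintype B0] [DecidableEq B0] [Fintype B1]
    (Θ : (Matrix A0 A0 ℂ →ₗ[ℂ] Matrix A1 A1 ℂ) → (Matrix B0 B0 ℂ →ₗ[ℂ] Matrix B1 B1 ℂ)) : Prop :=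
  (∀ (c : ℂ) (N M : Matrix A0 A0 ℂ →ₗ[ℂ] Matrix A1 A1 ℂ), Θ (c • N + M) = c • Θ N + Θ M) ∧
  (∀ N, IsTracePreserving N → IsTracePreserving (Θ N)) ∧
  (∀ (R0 R1 : Type) [Fintype R0] [DecidableEq R0] [Fintype R1] [DecidableEq R1],
    ∀ 𝒩 : Matrix (R0 × A0) (R0 × A0) ℂ →ₗ[ℂ] Matrix (R1 × A1) (R1 × A1) ℂ,
      IsCompletelyPositive 𝒩 → IsCompletelyPositive (idSupertensor R0 R1 Θ 𝒩))

/-- Partial trace over the first tensor factor. -/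
def ptraceFst {R S : Type*} [Fintype R] (X : Matrix (R × S) (R × S) ℂ) : Matrix S S ℂ :=
  Matrix.of fun i j => ∑ r : R, X (r, i) (r, j)

/-- Partial trace over the second tensor factor. -/
def ptraceSnd {R S : Type*} [Fintype S] (X : Matrix (R × S) (R × S) ℂ) : Matrix R R ℂ :=
  Matrix.of fun i j => ∑ s : S, X (i, s) (j, s)

/-- Marginal `J_{A1B0}` of a superchannel Choi matrix. -/
def margA1B0 {A0 A1 B0 B1 : Type*} [Fintype A0] [Fintype B1]
    (J : Matrix ((A0 × A1) × (B0 × B1)) ((A0 × A1) × (B0 × B1)) ℂ) :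
    Matrix (A1 × B0) (A1 × B0) ℂ :=
  Matrix.of fun p q => ∑ i : A0, ∑ r : B1, J ((i, p.1), (p.2, r)) ((i, q.1), (q.2, r))

/-- Marginal `J_{AB0}` of a superchannel Choi matrix. -/
def margAB0 {A0 A1 B0 B1 : Type*} [Fintype B1]
    (J : Matrix ((A0 × A1) × (B0 × B1)) ((A0 × A1) × (B0 × B1)) ℂ) :
    Matrix ((A0 × A1) × B0) ((A0 × A1) × B0) ℂ :=
  Matrix.of fun p q => ∑ r : B1, J (p.1, (p.2, r)) (q.1, (q.2, r))

/-- Marginal `J_{A0B0}` of a superchannel Choi matrix. -/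
def margA0B0 {A0 A1 B0 B1 : Type*} [Fintype A1] [Fintype B1]
    (J : Matrix ((A0 × A1) × (B0 × B1)) ((A0 × A1) × (B0 × B1)) ℂ) :
    Matrix (A0 × B0) (A0 × B0) ℂ :=
  Matrix.of fun p q => ∑ k : A1, ∑ r : B1, J ((p.1, k), (p.2, r)) ((q.1, k), (q.2, r))

/-- Partial trace over the `A` system of a matrix on `AB`. -/
def trA {A0 A1 B0 B1 : Type*} [Fintype A0] [Fintype A1]
    (X : Matrix ((A0 × A1) × (B0 × B1)) ((A0 × A1) × (B0 × B1)) ℂ) :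
    Matrix (B0 × B1) (B0 × B1) ℂ :=
  Matrix.of fun b b' => ∑ a : A0 × A1, X (a, b) (a, b')

/-- The linear map with a prescribed Choi matrix. -/
def mapOfChoi {B0 B1 : Type*} [Fintype B0]
    (C : Matrix (B0 × B1) (B0 × B1) ℂ) : Matrix B0 B0 ℂ →ₗ[ℂ] Matrix B1 B1 ℂ where
  toFun ρ := Matrix.of fun p q => ∑ m : B0, ∑ n : B0, C (m, p) (n, q) * ρ m n
  map_add' x y := by
    ext p q
    simp [Matrix.add_apply, mul_add, Finset.sum_add_distrib]
  map_smul' c x := by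
    ext p q
    simp [Matrix.smul_apply, Finset.mul_sum, smul_eq_mul]
    ring_nf
    simp [Finset.mul_sum, mul_comm, mul_left_comm]

/-- The supermap determined by a Choi matrix on `AB`, acting on Choi matrices via
`R(J^N) = tr_A[J ((J^N)^T ⊗ I)]`. -/
def choiToSupermap {A0 A1 B0 B1 : Type*} [Fintype A0] [DecidableEq A0] [Fintype A1] [Fintype B0]
    (J : Matrix ((A0 × A1) × (B0 × B1)) ((A0 × A1) × (B0 × B1)) ℂ) :
    (Matrix A0 A0 ℂ →ₗ[ℂ] Matrix A1 A1 ℂ) → (Matrix B0 B0 ℂ →ₗ[ℂ] Matrix B1 B1 ℂ) :=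
  fun N => mapOfChoi (Matrix.of fun bp bq => ∑ x : A0 × A1, ∑ y : A0 × A1,
    J (x, bp) (y, bq) * choi N x y)

/-- Unnormalized maximally entangled state `φ+ = Σ_{ij} |ii⟩⟨jj|`. -/
def phiPlus (A : Type*) [DecidableEq A] : Matrix (A × A) (A × A) ℂ :=
  Matrix.of fun p q => if p.1 = p.2 ∧ q.1 = q.2 then 1 else 0

/-- Conjugation channel `ρ ↦ V ρ V†`. -/
def conjMap {E E' : Type*} [Fintype E]
    (V : Matrix E' E ℂ) : Matrix E E ℂ →ₗ[ℂ] Matrix E' E' ℂ where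
  toFun ρ := V * ρ * Vᴴ
  map_add' x y := by simp [Matrix.mul_add, Matrix.add_mul]
  map_smul' c x := by simp [Matrix.mul_smul, Matrix.smul_mul]

/-- Left inverse of an isometry channel: `σ ↦ V†σV + tr[(I − VV†)σ] τ`. -/
def invMap {E E' : Type*} [Fintype E] [Fintype E'] [DecidableEq E']
    (V : Matrix E' E ℂ) (τ : Matrix E E ℂ) : Matrix E' E' ℂ →ₗ[ℂ] Matrix E E ℂ where
  toFun σ := Vᴴ * σ * V + (Matrix.trace ((1 - V * Vᴴ) * σ)) • τ
  map_add' x y := by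
    simp only [Matrix.mul_add, Matrix.add_mul, Matrix.trace_add, add_smul]
    abel
  map_smul' c x := by
    simp [Matrix.mul_smul, Matrix.smul_mul, smul_add, smul_smul, smul_eq_mul]

/-- Dual cone (within Hermitian matrices) with respect to the Hilbert–Schmidt inner product. -/
def dualCone {n : Type*} [Fintype n] (K : Set (Matrix n n ℂ)) : Set (Matrix n n ℂ) :=
  {W | W.IsHermitian ∧ ∀ M ∈ K, 0 ≤ (Matrix.trace (W * M)).re}

/-- Trace norm, characterized as `max_U Re tr[U X]` over unitaries. -/
def traceNorm {n : Type*} [Fintype n] [DecidableEq n] (X : Matrix n n ℂ) : ℝ :=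
  sSup {y : ℝ | ∃ U ∈ Matrix.unitaryGroup n ℂ, y = (Matrix.trace ((U : Matrix n n ℂ) * X)).re}

/-- Diamond norm of a Hermitian-preserving map. -/
def diamondNorm {B0 B1 : Type*} [Fintype B0] [DecidableEq B0] [Fintype B1] [DecidableEq B1]
    (L : Matrix B0 B0 ℂ →ₗ[ℂ] Matrix B1 B1 ℂ) : ℝ :=
  sSup {x : ℝ | ∃ v : B0 × B0 → ℂ, (∑ p : B0 × B0, Complex.normSq (v p)) = 1 ∧
    x = traceNorm ((mapTensor (LinearMap.id (R := ℂ) (M := Matrix B0 B0 ℂ)) L)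
        (Matrix.of fun p q => v p * (starRingEnd ℂ) (v q)))}

/-- The monotone `f_P(N) = max_{Θ ∈ FREE} ⟨P, Θ[N]⟩`. -/
def fP {A0 A1 B0 B1 : Type*} [DecidableEq A1] [Fintype B0] [DecidableEq B0] [Fintype B1]
    (FREE : Set ((Matrix A0 A0 ℂ →ₗ[ℂ] Matrix A1 A1 ℂ) → (Matrix B0 B0 ℂ →ₗ[ℂ] Matrix B1 B1 ℂ)))
    (P : Matrix B0 B0 ℂ →ₗ[ℂ] Matrix B1 B1 ℂ)
    (N : Matrix A0 A0 ℂ →ₗ[ℂ] Matrix A1 A1 ℂ) : ℝ :=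
  sSup {x : ℝ | ∃ Θ ∈ FREE, x = (Matrix.trace ((choi P)ᴴ * choi (Θ N))).re}

/-- `g(P) = max_{M free} ⟨P, M⟩`. -/
def gP {B0 B1 : Type*} [Fintype B0] [DecidableEq B0] [Fintype B1]
    (FB : Set (Matrix B0 B0 ℂ →ₗ[ℂ] Matrix B1 B1 ℂ))
    (P : Matrix B0 B0 ℂ →ₗ[ℂ] Matrix B1 B1 ℂ) : ℝ :=
  sSup {x : ℝ | ∃ C ∈ FB, x = (Matrix.trace ((choi P)ᴴ * choi C)).re}

/-- Replacement supermap: the superchannel that (on channels) replaces the input with `C`. -/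
def replSupermap {A0 A1 B0 B1 : Type*} [Fintype A0] [DecidableEq A0] [Fintype A1]
    (C : Matrix B0 B0 ℂ →ₗ[ℂ] Matrix B1 B1 ℂ) :
    (Matrix A0 A0 ℂ →ₗ[ℂ] Matrix A1 A1 ℂ) → (Matrix B0 B0 ℂ →ₗ[ℂ] Matrix B1 B1 ℂ) :=
  fun N => ((Matrix.trace (choi N)) / (Fintype.card A0 : ℂ)) • C

/-- Appending supermap `N ↦ N ⊗ C`. -/
def appendSupermap {A0 A1 B0 B1 : Type*} [Fintype A0] [DecidableEq A0] [Fintype B0] [DecidableEq B0]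
    (C : Matrix B0 B0 ℂ →ₗ[ℂ] Matrix B1 B1 ℂ) :
    (Matrix A0 A0 ℂ →ₗ[ℂ] Matrix A1 A1 ℂ) →
      (Matrix (A0 × B0) (A0 × B0) ℂ →ₗ[ℂ] Matrix (A1 × B1) (A1 × B1) ℂ) :=
  fun N => mapTensor N C

/-! By linearity of `Θ`, `tr_A[J^Θ ((J^N)ᵀ ⊗ I)]` is the Choi matrix of `Θ N`, so the marginal
condition is trace preservation of `Θ N`. For positivity, complete positivity of `Θ` with trivial
reference systems, applied to the completely positive map `id_1 ⊗ N`, yields a completely positive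
map whose Choi matrix is `J^{Θ N}` up to relabelling. -/

section
variable {A0 A1 B0 B1 : Type*}

lemma linearMap_apply_eq_sum_single {m n : Type*} [Fintype m] [DecidableEq m]
    (Φ : Matrix m m ℂ →ₗ[ℂ] Matrix n n ℂ) (X : Matrix m m ℂ) (r s : n) :
    Φ X r s = ∑ a : m, ∑ b : m, X a b * Φ (Matrix.single a b 1) r s := by
  have hsingle : ∀ a b, Matrix.single a b (X a b) = X a b • Matrix.single a b 1 := by simp
  conv_lhs => rw [Matrix.matrix_eq_sum_single X]
  simp only [hsingle, map_sum, map_smul, Matrix.sum_apply, Matrix.smul_apply, smul_eq_mul]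

lemma mapTensor_single [Fintype A0] [DecidableEq A0] [Fintype B0] [DecidableEq B0]
    (N : Matrix A0 A0 ℂ →ₗ[ℂ] Matrix A1 A1 ℂ) (M : Matrix B0 B0 ℂ →ₗ[ℂ] Matrix B1 B1 ℂ)
    (i j : A0) (k l : B0) :
    mapTensor N M (Matrix.single (i, k) (j, l) 1) =
      N (Matrix.single i j 1) ⊗ₖ M (Matrix.single k l 1) := by
  simp [mapTensor, Matrix.single_apply, ite_and, Finset.sum_ite_eq]

lemma choi_mapTensor [Fintype A0] [DecidableEq A0] [Fintype B0] [DecidableEq B0]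
    (N : Matrix A0 A0 ℂ →ₗ[ℂ] Matrix A1 A1 ℂ) (M : Matrix B0 B0 ℂ →ₗ[ℂ] Matrix B1 B1 ℂ)
    (i0 j0 : A0) (i1 j1 : A1) (p0 q0 : B0) (p1 q1 : B1) :
    choi (mapTensor N M) ((i0, p0), (i1, p1)) ((j0, q0), (j1, q1)) =
      choi N (i0, i1) (j0, j1) * choi M (p0, p1) (q0, q1) := by
  simp [choi, mapTensor_single]

lemma choi_elemMap [DecidableEq A0] [DecidableEq A1] (i j : A0) (k l : A1) :
    choi (elemMap i j k l) = Matrix.single (i, k) (j, l) 1 := by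
  ext x y
  simp only [choi, elemMap, Matrix.of_apply, LinearMap.coe_mk, AddHom.coe_mk, Matrix.smul_apply,
    Matrix.single_apply, Prod.ext_iff, smul_eq_mul]
  split_ifs <;> simp_all

lemma mapTensor_id_apply {R : Type*} [Fintype R] [DecidableEq R] [Fintype A0] [DecidableEq A0]
    (N : Matrix A0 A0 ℂ →ₗ[ℂ] Matrix A1 A1 ℂ)
    (ρ : Matrix (R × A0) (R × A0) ℂ) (r s : R) (k l : A1) :
    mapTensor LinearMap.id N ρ (r, k) (s, l) =
      N (Matrix.of fun a b => ρ (r, a) (s, b)) k l := by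
  rw [linearMap_apply_eq_sum_single (mapTensor _ N), linearMap_apply_eq_sum_single N]
  simp [Fintype.sum_prod_type, mapTensor_single, Matrix.single_apply, ite_and]

lemma choi_idSupertensor_apply {R0 R1 : Type*}
    [Fintype R0] [DecidableEq R0] [Fintype R1] [DecidableEq R1]
    [Fintype A0] [DecidableEq A0] [Fintype A1] [DecidableEq A1] [Fintype B0] [DecidableEq B0]
    (Θ : (Matrix A0 A0 ℂ →ₗ[ℂ] Matrix A1 A1 ℂ) → (Matrix B0 B0 ℂ →ₗ[ℂ] Matrix B1 B1 ℂ))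
    (𝒩 : Matrix (R0 × A0) (R0 × A0) ℂ →ₗ[ℂ] Matrix (R1 × A1) (R1 × A1) ℂ)
    (i0 j0 : R0) (i1 j1 : R1) (p0 q0 : B0) (p1 q1 : B1) :
    choi (idSupertensor R0 R1 Θ 𝒩) ((i0, p0), (i1, p1)) ((j0, q0), (j1, q1)) =
      ∑ a : A0 × A1, ∑ b : A0 × A1, choi 𝒩 ((i0, a.1), (i1, a.2)) ((j0, b.1), (j1, b.2)) *
        choi (Θ (elemMap a.1 b.1 a.2 b.2)) (p0, p1) (q0, q1) := by
  have hchoi : ∀ (M : Matrix (R0 × B0) (R0 × B0) ℂ →ₗ[ℂ] Matrix (R1 × B1) (R1 × B1) ℂ) x y,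
      choi M x y = M (Matrix.single x.1 y.1 1) x.2 y.2 := fun _ _ _ => rfl
  simp only [hchoi, idSupertensor, LinearMap.sum_apply, LinearMap.smul_apply,
    Matrix.sum_apply, Matrix.smul_apply, smul_eq_mul, mapTensor_single, Matrix.kroneckerMap_apply]
  have helem : ∀ a b c d, elemMap a b c d (Matrix.single i0 j0 1) i1 j1 =
      Matrix.single (a, c) (b, d) (1 : ℂ) (i0, i1) (j0, j1) := fun a b c d =>
    congrFun (congrFun (choi_elemMap a b c d) (i0, i1)) (j0, j1)
  simp only [helem, Matrix.single_apply, Prod.mk.injEq, ite_and]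
  simp only [ite_mul, mul_ite, one_mul, zero_mul, mul_zero, Finset.sum_ite_eq', Finset.mem_univ,
    if_true, Finset.sum_ite_irrel, Finset.sum_const_zero, Fintype.sum_prod_type]
  refine Finset.sum_congr rfl fun _ _ => ?_
  exact Finset.sum_comm

lemma isLinearMap_of_map_smul_add {R M M₂ : Type*} [Semiring R] [AddCommMonoid M]
    [AddCommGroup M₂] [Module R M] [Module R M₂] {f : M → M₂}
    (h : ∀ (c : R) (x y : M), f (c • x + y) = c • f x + f y) : IsLinearMap R f := by
  have h0 : f 0 = 0 := by simpa using h 1 0 0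
  exact ⟨fun x y => by simpa using h 1 x y, fun c x => by simpa [h0] using h c x 0⟩

lemma sum_choi_smul_elemMap [Fintype A0] [DecidableEq A0] [Fintype A1] [DecidableEq A1]
    (N : Matrix A0 A0 ℂ →ₗ[ℂ] Matrix A1 A1 ℂ) :
    ∑ a : A0 × A1, ∑ b : A0 × A1, choi N a b • elemMap a.1 b.1 a.2 b.2 = N := by
  refine LinearMap.ext fun ρ => Matrix.ext fun k l => ?_
  rw [linearMap_apply_eq_sum_single N ρ k l]
  simp [elemMap, choi, Matrix.sum_apply, Matrix.single_apply, Fintype.sum_prod_type, mul_comm,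
    ite_and]

lemma apply_eq_sum_choi_smul [Fintype A0] [DecidableEq A0] [Fintype A1] [DecidableEq A1]
    {Θ : (Matrix A0 A0 ℂ →ₗ[ℂ] Matrix A1 A1 ℂ) → (Matrix B0 B0 ℂ →ₗ[ℂ] Matrix B1 B1 ℂ)}
    (hΘ : IsLinearMap ℂ Θ) (N : Matrix A0 A0 ℂ →ₗ[ℂ] Matrix A1 A1 ℂ) :
    Θ N = ∑ a : A0 × A1, ∑ b : A0 × A1, choi N a b • Θ (elemMap a.1 b.1 a.2 b.2) := by
  conv_lhs => rw [← sum_choi_smul_elemMap N]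
  simp only [← IsLinearMap.mk'_apply hΘ, map_sum, map_smul]

lemma choi_apply_eq_sum [Fintype A0] [DecidableEq A0] [Fintype A1] [DecidableEq A1]
    [DecidableEq B0]
    {Θ : (Matrix A0 A0 ℂ →ₗ[ℂ] Matrix A1 A1 ℂ) → (Matrix B0 B0 ℂ →ₗ[ℂ] Matrix B1 B1 ℂ)}
    (hΘ : IsLinearMap ℂ Θ) (N : Matrix A0 A0 ℂ →ₗ[ℂ] Matrix A1 A1 ℂ) (p q : B0 × B1) :
    choi (Θ N) p q =
      ∑ a : A0 × A1, ∑ b : A0 × A1, choi N a b * choi (Θ (elemMap a.1 b.1 a.2 b.2)) p q := by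
  rw [apply_eq_sum_choi_smul hΘ N]
  simp only [choi, Matrix.of_apply, LinearMap.sum_apply, LinearMap.smul_apply, Matrix.sum_apply,
    Matrix.smul_apply, smul_eq_mul]

lemma trA_superChoi_mul_kronecker_apply [Fintype A0] [DecidableEq A0] [Fintype A1]
    [DecidableEq A1] [Fintype B0] [DecidableEq B0] [Fintype B1] [DecidableEq B1]
    (Θ : (Matrix A0 A0 ℂ →ₗ[ℂ] Matrix A1 A1 ℂ) → (Matrix B0 B0 ℂ →ₗ[ℂ] Matrix B1 B1 ℂ))
    (X : Matrix (A0 × A1) (A0 × A1) ℂ) (p q : B0 × B1) :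
    trA (superChoi Θ * (Xᵀ ⊗ₖ (1 : Matrix (B0 × B1) (B0 × B1) ℂ))) p q =
      ∑ a : A0 × A1, ∑ b : A0 × A1, X a b * choi (Θ (elemMap a.1 b.1 a.2 b.2)) p q := by
  simp [trA, superChoi, Matrix.mul_apply, Fintype.sum_prod_type, Matrix.one_apply, mul_comm]

lemma trA_superChoi_mul_choi_transpose [Fintype A0] [DecidableEq A0] [Fintype A1]
    [DecidableEq A1] [Fintype B0] [DecidableEq B0] [Fintype B1] [DecidableEq B1]
    {Θ : (Matrix A0 A0 ℂ →ₗ[ℂ] Matrix A1 A1 ℂ) → (Matrix B0 B0 ℂ →ₗ[ℂ] Matrix B1 B1 ℂ)}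
    (hΘ : IsLinearMap ℂ Θ) (N : Matrix A0 A0 ℂ →ₗ[ℂ] Matrix A1 A1 ℂ) :
    trA (superChoi Θ * ((choi N)ᵀ ⊗ₖ (1 : Matrix (B0 × B1) (B0 × B1) ℂ))) = choi (Θ N) := by
  ext p q
  rw [trA_superChoi_mul_kronecker_apply, choi_apply_eq_sum hΘ]

lemma IsTracePreserving.ptraceSnd_choi [Fintype B0] [DecidableEq B0] [Fintype B1]
    {M : Matrix B0 B0 ℂ →ₗ[ℂ] Matrix B1 B1 ℂ} (hM : IsTracePreserving M) :
    ptraceSnd (choi M) = 1 := by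
  ext i j
  change (M (Matrix.single i j 1)).trace = _
  rw [hM, Matrix.one_apply]
  split_ifs with h
  · rw [h, Matrix.trace_single_eq_same]
  · exact Matrix.trace_single_eq_of_ne _ _ _ h

lemma phiPlus_eq_vecMulVec (B : Type*) [DecidableEq B] :
    phiPlus B = vecMulVec (fun p : B × B => if p.1 = p.2 then 1 else 0)
      (star fun p : B × B => if p.1 = p.2 then 1 else 0) := by
  ext p q
  by_cases hp : p.1 = p.2 <;> by_cases hq : q.1 = q.2 <;> simp [phiPlus, vecMulVec_apply, hp, hq]

lemma posSemidef_phiPlus (B : Type*) [Fintype B] [DecidableEq B] : (phiPlus B).PosSemidef := by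
  rw [phiPlus_eq_vecMulVec]
  exact posSemidef_vecMulVec_self_star _

lemma IsCompletelyPositive.mapTensor_id {R' : Type} [Fintype R'] [DecidableEq R']
    [Fintype A0] [DecidableEq A0] [Fintype A1] {N : Matrix A0 A0 ℂ →ₗ[ℂ] Matrix A1 A1 ℂ}
    (hN : IsCompletelyPositive N) :
    IsCompletelyPositive (mapTensor (LinearMap.id (M := Matrix R' R' ℂ)) N) := by
  intro R _ _ ρ hρ
  have hassoc : mapTensor LinearMap.id (mapTensor LinearMap.id N) ρ =
      (mapTensor LinearMap.id N (ρ.submatrix (Equiv.prodAssoc R R' A0) (Equiv.prodAssoc R R' A0))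
        ).submatrix (Equiv.prodAssoc R R' A1).symm (Equiv.prodAssoc R R' A1).symm := by
    ext ⟨r, r', k⟩ ⟨s, s', l⟩
    simp only [Matrix.submatrix_apply, Equiv.prodAssoc_symm_apply, mapTensor_id_apply]
    rfl
  rw [hassoc]
  exact (hN _ _ (hρ.submatrix _)).submatrix _

lemma IsCompletelyPositive.posSemidef_choi [Fintype B0] [DecidableEq B0] [Fintype B1]
    {M : Matrix B0 B0 ℂ →ₗ[ℂ] Matrix B1 B1 ℂ} (hM : IsCompletelyPositive M) :
    (choi M).PosSemidef := by
  let e : Fin (Fintype.card B0) ≃ B0 := (Fintype.equivFin B0).symm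
  let ω := (phiPlus B0).submatrix (Prod.map e id) (Prod.map e id)
  have hchoi : choi M = (mapTensor LinearMap.id M ω).submatrix
      (Prod.map e.symm id) (Prod.map e.symm id) := by
    ext ⟨p0, p1⟩ ⟨q0, q1⟩
    simp [ω, choi, mapTensor_id_apply, phiPlus, Matrix.single, eq_comm]
  rw [hchoi]
  exact (hM _ ω ((posSemidef_phiPlus B0).submatrix _)).submatrix _

lemma IsSuperchannel.posSemidef_choi_apply [Fintype A0] [DecidableEq A0] [Fintype A1]
    [DecidableEq A1] [Fintype B0] [DecidableEq B0] [Fintype B1]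
    {Θ : (Matrix A0 A0 ℂ →ₗ[ℂ] Matrix A1 A1 ℂ) → (Matrix B0 B0 ℂ →ₗ[ℂ] Matrix B1 B1 ℂ)}
    (hΘ : IsSuperchannel Θ) {N : Matrix A0 A0 ℂ →ₗ[ℂ] Matrix A1 A1 ℂ}
    (hN : IsCompletelyPositive N) : (choi (Θ N)).PosSemidef := by
  obtain ⟨hlin, -, hcp⟩ := hΘ
  let 𝒩 := mapTensor (LinearMap.id (M := Matrix Unit Unit ℂ)) N
  have hchoi : choi (Θ N) = (choi (idSupertensor Unit Unit Θ 𝒩)).submatrix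
      (fun p => (((), p.1), ((), p.2))) (fun p => (((), p.1), ((), p.2))) := by
    ext ⟨p0, p1⟩ ⟨q0, q1⟩
    rw [Matrix.submatrix_apply, choi_idSupertensor_apply,
      choi_apply_eq_sum (isLinearMap_of_map_smul_add hlin) N]
    refine Finset.sum_congr rfl fun a _ => Finset.sum_congr rfl fun b _ => ?_
    rw [choi_mapTensor]
    simp [choi]
  rw [hchoi]
  exact ((hcp Unit Unit 𝒩 hN.mapTensor_id).posSemidef_choi).submatrix _

end

end Dyn
end

/-- a superchannel maps Choi matrices of channels to Choi matrices of
channels. -/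
theorem superchannel_maps_choi {A0 A1 B0 B1 : Type*}
    [Fintype A0] [DecidableEq A0] [Fintype A1] [DecidableEq A1]
    [Fintype B0] [DecidableEq B0] [Fintype B1] [DecidableEq B1]
    (Θ : (Matrix A0 A0 ℂ →ₗ[ℂ] Matrix A1 A1 ℂ) → (Matrix B0 B0 ℂ →ₗ[ℂ] Matrix B1 B1 ℂ))
    (hΘ : Dyn.IsSuperchannel Θ)
    (N : Matrix A0 A0 ℂ →ₗ[ℂ] Matrix A1 A1 ℂ) (hN : Dyn.IsChannel N) :
    (Dyn.trA (Dyn.superChoi Θ *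
        ((Dyn.choi N)ᵀ ⊗ₖ (1 : Matrix (B0 × B1) (B0 × B1) ℂ)))).PosSemidef ∧
    Dyn.ptraceSnd (Dyn.trA (Dyn.superChoi Θ *
        ((Dyn.choi N)ᵀ ⊗ₖ (1 : Matrix (B0 × B1) (B0 × B1) ℂ)))) = 1 := by
  rw [Dyn.trA_superChoi_mul_choi_transpose (Dyn.isLinearMap_of_map_smul_add hΘ.1)]
  exact ⟨hΘ.posSemidef_choi_apply hN.1, (hΘ.2.1 N hN.2).ptraceSnd_choi⟩
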